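/- Let R be an ergodic countable Borel equivalence relation on a standard Borel space X with an atomless quasi-invariant Borel probability measure μ, and let Φ be a finite graphing of R. Then the metric-measure space (X, d_Φ, μ) is concentrated if and only if R is strongly ergodic. (An ergodic singular space of finite type is concentrated if and only if it is strongly ergodic.) -/

import Mathlib

open MeasureTheory Filter Set
open scoped ENNReal

/-- A partial isomorphism of a standard Borel space `X`: a Borel bijection between
two Borel subsets `dom` and `ran` of `X`, with Borel inverse. -/
structure PartialIso (X : Type*) [MeasurableSpace X] where
  dom : Set X
  ran : Set X
  toFun : X → X
  invFun : X → X
  measurableSet_dom : MeasurableSet dom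
  measurableSet_ran : MeasurableSet ran
  measurable_toFun : Measurable toFun
  measurable_invFun : Measurable invFun
  mapsTo : Set.MapsTo toFun dom ran
  mapsTo_inv : Set.MapsTo invFun ran dom
  left_inv : ∀ x ∈ dom, invFun (toFun x) = x
  right_inv : ∀ y ∈ ran, toFun (invFun y) = y

namespace PartialIso

variable {X : Type*} [MeasurableSpace X]

/-- The identity as a partial isomorphism. -/
def refl (X : Type*) [MeasurableSpace X] : PartialIso X :=
  ⟨Set.univ, Set.univ, id, id, MeasurableSet.univ, MeasurableSet.univ,
   measurable_id, measurable_id, Set.mapsTo_univ _ _, Set.mapsTo_univ _ _,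
   fun _ _ => rfl, fun _ _ => rfl⟩

/-- The inverse of a partial isomorphism. -/
def symm (f : PartialIso X) : PartialIso X :=
  ⟨f.ran, f.dom, f.invFun, f.toFun, f.measurableSet_ran, f.measurableSet_dom,
   f.measurable_invFun, f.measurable_toFun, f.mapsTo_inv, f.mapsTo,
   f.right_inv, f.left_inv⟩

/-- Composition (first `f`, then `g`) of partial isomorphisms, on its natural domain. -/
def trans (f g : PartialIso X) : PartialIso X where
  dom := f.dom ∩ f.toFun ⁻¹' g.dom
  ran := g.ran ∩ g.invFun ⁻¹' f.ran
  toFun := g.toFun ∘ f.toFun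
  invFun := f.invFun ∘ g.invFun
  measurableSet_dom := f.measurableSet_dom.inter (f.measurable_toFun g.measurableSet_dom)
  measurableSet_ran := g.measurableSet_ran.inter (g.measurable_invFun f.measurableSet_ran)
  measurable_toFun := g.measurable_toFun.comp f.measurable_toFun
  measurable_invFun := f.measurable_invFun.comp g.measurable_invFun
  mapsTo := by
    rintro x ⟨hx1, hx2⟩
    refine ⟨g.mapsTo hx2, ?_⟩
    show g.invFun (g.toFun (f.toFun x)) ∈ f.ran
    rw [g.left_inv _ hx2]
    exact f.mapsTo hx1
  mapsTo_inv := by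
    rintro y ⟨hy1, hy2⟩
    refine ⟨f.mapsTo_inv hy2, ?_⟩
    show f.toFun (f.invFun (g.invFun y)) ∈ g.dom
    rw [f.right_inv _ hy2]
    exact g.mapsTo_inv hy1
  left_inv := by
    rintro x ⟨hx1, hx2⟩
    show f.invFun (g.invFun (g.toFun (f.toFun x))) = x
    rw [g.left_inv _ hx2, f.left_inv _ hx1]
  right_inv := by
    rintro y ⟨hy1, hy2⟩
    show g.toFun (f.toFun (f.invFun (g.invFun y))) = y
    rw [f.right_inv _ hy2, g.right_inv _ hy1]

/-- A partial isomorphism is nonsingular for `μ` (is a partial isomorphism of `(X, μ)`)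
if it maps null sets inside its domain exactly to null sets. -/
def Nonsingular (μ : Measure X) (f : PartialIso X) : Prop :=
  ∀ A ⊆ f.dom, MeasurableSet A → (μ A = 0 ↔ μ (f.toFun '' A) = 0)

/-- The graph of the partial isomorphism `f` is contained in the relation `R`. -/
def IsInnerOf (f : PartialIso X) (R : Set (X × X)) : Prop :=
  ∀ x ∈ f.dom, (x, f.toFun x) ∈ R

end PartialIso

variable {X : Type*} [MeasurableSpace X]

/-- `IsWord Φ m k` : `m` is a `Φ`-word of length `k`, i.e. a composition of `k` elements
of `Φ` and their inverses (on its natural domain). -/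
def IsWord (Φ : Set (PartialIso X)) (m : PartialIso X) (k : ℕ) : Prop :=
  ∃ l : List (PartialIso X), l.length = k ∧
    (∀ φ ∈ l, φ ∈ Φ ∨ ∃ ψ ∈ Φ, φ = ψ.symm) ∧
    m = l.foldl PartialIso.trans (PartialIso.refl X)

/-- `wordDistLE Φ μ A B r` : the essential distance `d_Φ(A, B)` is at most `r`, i.e. the
set of points of `A` sent into `B` by some `Φ`-word of length at most `r` has positive
measure. -/
def wordDistLE (Φ : Set (PartialIso X)) (μ : Measure X) (A B : Set X) (r : ℕ) : Prop :=
  0 < μ {x ∈ A | ∃ m k, IsWord Φ m k ∧ k ≤ r ∧ x ∈ m.dom ∧ m.toFun x ∈ B}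

/-- The metric-measure space `(X, d_Φ, μ)` is concentrated. -/
def Concentrated (Φ : Set (PartialIso X)) (μ : Measure X) : Prop :=
  ∀ δ : ℝ≥0∞, 0 < δ → ∃ r : ℕ, ∀ A B : Set X, MeasurableSet A → MeasurableSet B →
    δ ≤ μ A → δ ≤ μ B → wordDistLE Φ μ A B r

/-- The metric `d_Φ` is ergodic relative to `μ` : any two sets of positive measure are at
finite essential distance. -/
def MetricErgodic (Φ : Set (PartialIso X)) (μ : Measure X) : Prop :=
  ∀ A B : Set X, MeasurableSet A → MeasurableSet B → 0 < μ A → 0 < μ B →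
    ∃ r : ℕ, wordDistLE Φ μ A B r

/-- A sequence of Borel sets is asymptotically invariant for the family `Φ`. -/
def AsympInvariant (Φ : Set (PartialIso X)) (μ : Measure X) (A : ℕ → Set X) : Prop :=
  ∀ m k, IsWord Φ m k →
    Tendsto (fun n => μ (m.toFun '' (A n ∩ m.dom) \ A n)) atTop (nhds 0)

/-- A sequence of Borel sets is nontrivial: measures uniformly bounded away from `0` and `1`. -/
def NontrivialSeq (μ : Measure X) (A : ℕ → Set X) : Prop :=
  ∃ δ : ℝ≥0∞, 0 < δ ∧ ∀ n, δ ≤ μ (A n) ∧ μ (A n) ≤ 1 - δ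

/-- A countable Borel equivalence relation on `X`. -/
def IsCountableBorelER (R : Set (X × X)) : Prop :=
  MeasurableSet R ∧ Equivalence (fun x y => (x, y) ∈ R) ∧ ∀ x, {y | (x, y) ∈ R}.Countable

/-- `μ` is quasi-invariant for `R` : partial isomorphisms of `R` map null sets to null sets. -/
def QuasiInvariant (μ : Measure X) (R : Set (X × X)) : Prop :=
  ∀ f : PartialIso X, f.IsInnerOf R → ∀ N ⊆ f.dom, MeasurableSet N → μ N = 0 →
    μ (f.toFun '' N) = 0

/-- `μ` is invariant for `R` : partial isomorphisms of `R` preserve the measure. -/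
def InvariantMeasure (μ : Measure X) (R : Set (X × X)) : Prop :=
  ∀ f : PartialIso X, f.IsInnerOf R → ∀ A ⊆ f.dom, MeasurableSet A →
    μ (f.toFun '' A) = μ A

/-- `R` is ergodic for `μ` : every Borel saturated set is null or conull. -/
def ErgodicRel (μ : Measure X) (R : Set (X × X)) : Prop :=
  ∀ A : Set X, MeasurableSet A → (∀ x ∈ A, ∀ y, (x, y) ∈ R → y ∈ A) →
    μ A = 0 ∨ μ Aᶜ = 0

/-- `Φ` is a graphing of `R` : a family of partial isomorphisms of `R` whose words connect
almost every pair of equivalent points. -/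
def IsGraphing (Φ : Set (PartialIso X)) (μ : Measure X) (R : Set (X × X)) : Prop :=
  (∀ φ ∈ Φ, φ.IsInnerOf R) ∧
  ∀ᵐ x ∂μ, ∀ y, (x, y) ∈ R → ∃ m k, IsWord Φ m k ∧ x ∈ m.dom ∧ m.toFun x = y

/-- A sequence of Borel sets is asymptotically invariant for the relation `R`. -/
def AsympInvariantRel (μ : Measure X) (R : Set (X × X)) (A : ℕ → Set X) : Prop :=
  ∀ f : PartialIso X, f.IsInnerOf R →
    Tendsto (fun n => μ (f.toFun '' (A n ∩ f.dom) \ A n)) atTop (nhds 0)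

/-- `R` is strongly ergodic : every asymptotically invariant sequence is trivial. -/
def StronglyErgodic (μ : Measure X) (R : Set (X × X)) : Prop :=
  ¬ ∃ A : ℕ → Set X, (∀ n, MeasurableSet (A n)) ∧ AsympInvariantRel μ R A ∧
    NontrivialSeq μ A

/-- The boundary `∂_Φ A` of a set `A` with respect to the family `Φ`. -/
def bdry (Φ : Set (PartialIso X)) (A : Set X) : Set X :=
  (⋃ φ ∈ Φ, φ.toFun '' (A ∩ φ.dom) ∪ φ.invFun '' (A ∩ φ.ran)) \ A

/-- A vanishing Følner sequence for the family `Φ`. -/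
def VanishingFolner (Φ : Set (PartialIso X)) (μ : Measure X) (A : ℕ → Set X) : Prop :=
  (∀ n, MeasurableSet (A n)) ∧ (∀ n, 0 < μ (A n)) ∧
  Tendsto (fun n => μ (A n)) atTop (nhds 0) ∧
  Tendsto (fun n => μ (bdry Φ (A n)) / μ (A n)) atTop (nhds 0)

/-- The equivalence relation generated by the family `Φ` : `(x, y) ∈ RGen Φ` iff `y = m x`
for some `Φ`-word `m`. -/
def RGen (Φ : Set (PartialIso X)) : Set (X × X) :=
  {p | ∃ m k, IsWord Φ m k ∧ p.1 ∈ m.dom ∧ m.toFun p.1 = p.2}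

/-!
If `(X, d_Φ, μ)` is concentrated and `(A n)` is asymptotically invariant with
`δ ≤ μ (A n) ≤ 1 - δ`, then each of the finitely many `Φ`-words of length `≤ r` moves only a
vanishing part of `A n` out of `A n`; removing that part leaves a set of measure `≥ δ / 2` at
distance `> r` from `(A n)ᶜ`, contradicting concentration.

Conversely, if `A n` and `B n` have measure `≥ δ` and lie at distance `> n`, the shells between
the `k`- and `(k + 1)`-neighbourhoods of `B n`, `k ≤ n`, are disjoint, so one of them has measure
`≤ 1 / (n + 1)`. The inner neighbourhood `E n` of that shell has measure in `[δ, 1 - δ]`, and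
every generator moves `E n` only into the shell. Quasi-invariance propagates this to all words,
and since `Φ` is a graphing every partial isomorphism of `R` is, almost everywhere, a countable
patchwork of words; so `(E n)` is a nontrivial asymptotically invariant sequence.
-/

open Topology

namespace PartialIso

theorem ext {f g : PartialIso X} (hdom : f.dom = g.dom) (hran : f.ran = g.ran)
    (hto : f.toFun = g.toFun) (hinv : f.invFun = g.invFun) : f = g := by
  cases f; cases g; simp_all

@[simp] theorem refl_trans (f : PartialIso X) : (refl X).trans f = f :=
  ext (by simp [trans, refl]) (by simp [trans, refl]) rfl rfl

theorem trans_assoc (f g h : PartialIso X) :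
    (f.trans g).trans h = f.trans (g.trans h) :=
  ext (by simp [trans, Set.preimage_comp, Set.inter_assoc])
    (by simp [trans, Set.preimage_comp, Set.inter_assoc]) rfl rfl

theorem foldl_trans_eq (l : List (PartialIso X)) (e : PartialIso X) :
    l.foldl trans e = e.trans (l.foldl trans (refl X)) := by
  induction l generalizing e with
  | nil => exact ext (by simp [trans, refl]) (by simp [trans, refl]) rfl rfl
  | cons a l ih =>
    rw [List.foldl_cons, List.foldl_cons, ih, ih ((refl X).trans a), refl_trans, trans_assoc]

theorem injOn (f : PartialIso X) : Set.InjOn f.toFun f.dom := fun x hx y hy h => by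
  rw [← f.left_inv x hx, h, f.left_inv y hy]

theorem image_eq_preimage_inter (f : PartialIso X) {S : Set X} (hS : S ⊆ f.dom) :
    f.toFun '' S = f.invFun ⁻¹' S ∩ f.ran := by
  ext y
  constructor
  · rintro ⟨x, hx, rfl⟩
    exact ⟨by rwa [Set.mem_preimage, f.left_inv x (hS hx)], f.mapsTo (hS hx)⟩
  · rintro ⟨hy, hran⟩
    exact ⟨f.invFun y, hy, f.right_inv y hran⟩

theorem measurableSet_image (f : PartialIso X) {S : Set X} (hSm : MeasurableSet S)
    (hS : S ⊆ f.dom) : MeasurableSet (f.toFun '' S) := by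
  rw [f.image_eq_preimage_inter hS]
  exact (f.measurable_invFun hSm).inter f.measurableSet_ran

section IsInnerOf

variable {R : Set (X × X)} {f g : PartialIso X}

theorem isInnerOf_refl (hR : ∀ x, (x, x) ∈ R) : (refl X).IsInnerOf R := fun x _ => hR x

theorem IsInnerOf.symm (hR : ∀ {x y}, (x, y) ∈ R → (y, x) ∈ R) (hf : f.IsInnerOf R) :
    f.symm.IsInnerOf R := fun y hy => by
  show (y, f.invFun y) ∈ R
  simpa [f.right_inv y hy] using hR (hf _ (f.mapsTo_inv hy))

theorem IsInnerOf.trans (hR : ∀ {x y z}, (x, y) ∈ R → (y, z) ∈ R → (x, z) ∈ R)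
    (hf : f.IsInnerOf R) (hg : g.IsInnerOf R) : (f.trans g).IsInnerOf R :=
  fun x hx => hR (hf x hx.1) (hg _ hx.2)

end IsInnerOf

end PartialIso

open PartialIso

section Words

variable {Φ : Set (PartialIso X)}

theorem isWord_refl (Φ : Set (PartialIso X)) : IsWord Φ (refl X) 0 :=
  ⟨[], rfl, by simp, rfl⟩

theorem isWord_one (Φ : Set (PartialIso X)) {a : PartialIso X}
    (ha : a ∈ Φ ∨ ∃ ψ ∈ Φ, a = ψ.symm) : IsWord Φ a 1 :=
  ⟨[a], rfl, by simpa using ha, by simp⟩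

theorem IsWord.cons {a w : PartialIso X} {k : ℕ} (ha : a ∈ Φ ∨ ∃ ψ ∈ Φ, a = ψ.symm)
    (hw : IsWord Φ w k) : IsWord Φ (a.trans w) (k + 1) := by
  obtain ⟨l, rfl, hl, rfl⟩ := hw
  refine ⟨a :: l, rfl, ?_, ?_⟩
  · simpa [ha] using hl
  · rw [List.foldl_cons, refl_trans, foldl_trans_eq l a]

@[elab_as_elim]
theorem IsWord.induction {P : PartialIso X → ℕ → Prop} (nil : P (refl X) 0)
    (cons : ∀ a w k, (a ∈ Φ ∨ ∃ ψ ∈ Φ, a = ψ.symm) → IsWord Φ w k → P w k →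
      P (a.trans w) (k + 1))
    {m : PartialIso X} {k : ℕ} (hm : IsWord Φ m k) : P m k := by
  obtain ⟨l, rfl, hl, rfl⟩ := hm
  induction l with
  | nil => exact nil
  | cons a l ih =>
    have hl' : ∀ φ ∈ l, φ ∈ Φ ∨ ∃ ψ ∈ Φ, φ = ψ.symm := fun φ hφ => hl φ (by simp [hφ])
    rw [List.foldl_cons, refl_trans, foldl_trans_eq]
    exact cons a _ _ (hl a (by simp)) ⟨l, rfl, hl', rfl⟩ (ih hl')

theorem IsWord.trans {m m' : PartialIso X} {k k' : ℕ} (hm : IsWord Φ m k)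
    (hm' : IsWord Φ m' k') : IsWord Φ (m.trans m') (k + k') := by
  refine IsWord.induction (by simpa using hm') (fun a w k ha _ ih => ?_) hm
  rw [trans_assoc, Nat.add_right_comm]
  exact ih.cons ha

theorem IsWord.symm {m : PartialIso X} {k : ℕ} (hm : IsWord Φ m k) : IsWord Φ m.symm k := by
  refine IsWord.induction (isWord_refl Φ) (fun a w k ha _ ih => ?_) hm
  show IsWord Φ (w.symm.trans a.symm) (k + 1)
  refine ih.trans (isWord_one Φ ?_)
  rcases ha with ha | ⟨ψ, hψ, rfl⟩
  exacts [Or.inr ⟨a, ha, rfl⟩, Or.inl hψ]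

theorem IsWord.isInnerOf {R : Set (X × X)} (hR : Equivalence (fun x y => (x, y) ∈ R))
    (hΦ : ∀ φ ∈ Φ, φ.IsInnerOf R) {m : PartialIso X} {k : ℕ} (hm : IsWord Φ m k) :
    m.IsInnerOf R := by
  refine IsWord.induction (isInnerOf_refl hR.refl) (fun a w k ha _ ih => ?_) hm
  refine IsInnerOf.trans hR.trans ?_ ih
  rcases ha with ha | ⟨ψ, hψ, rfl⟩
  exacts [hΦ a ha, (hΦ ψ hψ).symm hR.symm]

theorem finite_setOf_isWord_le (hΦ : Φ.Finite) (r : ℕ) :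
    {m : PartialIso X | ∃ k ≤ r, IsWord Φ m k}.Finite := by
  let T := Φ ∪ PartialIso.symm '' Φ
  have : Finite T := (hΦ.union (hΦ.image _)).to_subtype
  refine ((List.finite_length_le T r).image
    fun l => (l.map Subtype.val).foldl PartialIso.trans (refl X)).subset ?_
  rintro m ⟨k, hk, l, rfl, hl, rfl⟩
  have hlT : ∀ φ ∈ l, φ ∈ T := fun φ hφ => by
    rcases hl φ hφ with h | ⟨ψ, hψ, rfl⟩
    exacts [Or.inl h, Or.inr ⟨ψ, hψ, rfl⟩]
  exact ⟨l.attach.map fun φ => (⟨φ.1, hlT φ.1 φ.2⟩ : T), by simpa using hk, by simp⟩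

theorem countable_setOf_isWord (hΦ : Φ.Finite) :
    {m : PartialIso X | ∃ k, IsWord Φ m k}.Countable :=
  (Set.countable_iUnion fun r => (finite_setOf_isWord_le hΦ r).countable).mono <| by
    rintro m ⟨k, hm⟩
    exact Set.mem_iUnion.2 ⟨k, k, le_rfl, hm⟩

end Words

section Thickening

variable {Φ : Set (PartialIso X)} {B : Set X}

/-- The closed `r`-neighbourhood of `B` for the word metric `d_Φ`. -/
def wordThickening (Φ : Set (PartialIso X)) (r : ℕ) (B : Set X) : Set X :=
  {x | ∃ m k, IsWord Φ m k ∧ k ≤ r ∧ x ∈ m.dom ∧ m.toFun x ∈ B}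

theorem wordDistLE_iff {μ : Measure X} {A : Set X} {r : ℕ} :
    wordDistLE Φ μ A B r ↔ 0 < μ (A ∩ wordThickening Φ r B) :=
  Iff.rfl

theorem wordThickening_eq_biUnion (Φ : Set (PartialIso X)) (r : ℕ) (B : Set X) :
    wordThickening Φ r B =
      ⋃ m ∈ {m : PartialIso X | ∃ k ≤ r, IsWord Φ m k}, m.dom ∩ m.toFun ⁻¹' B := by
  ext x
  simp only [wordThickening, Set.mem_ofPred_eq, Set.mem_iUnion, Set.mem_inter_iff,
    Set.mem_preimage, exists_prop]
  constructor
  · rintro ⟨m, k, hm, hk, hx, hmx⟩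
    exact ⟨m, ⟨k, hk, hm⟩, hx, hmx⟩
  · rintro ⟨m, ⟨k, hk, hm⟩, hx, hmx⟩
    exact ⟨m, k, hm, hk, hx, hmx⟩

theorem measurableSet_wordThickening (hΦ : Φ.Finite) (r : ℕ) (hB : MeasurableSet B) :
    MeasurableSet (wordThickening Φ r B) := by
  rw [wordThickening_eq_biUnion]
  exact (finite_setOf_isWord_le hΦ r).measurableSet_biUnion fun m _ =>
    m.measurableSet_dom.inter (m.measurable_toFun hB)

theorem subset_wordThickening (r : ℕ) : B ⊆ wordThickening Φ r B :=
  fun x hx => ⟨refl X, 0, isWord_refl Φ, r.zero_le, Set.mem_univ x, hx⟩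

theorem monotone_wordThickening : Monotone fun r => wordThickening Φ r B :=
  fun _ _ hr _ ⟨m, k, hm, hk, hx⟩ => ⟨m, k, hm, hk.trans hr, hx⟩

theorem image_wordThickening_subset {w : PartialIso X} {j : ℕ} (hw : IsWord Φ w j) (r : ℕ) :
    w.toFun '' (wordThickening Φ r B ∩ w.dom) ⊆ wordThickening Φ (r + j) B := by
  rintro _ ⟨x, ⟨⟨m, k, hm, hk, hx, hmx⟩, hxw⟩, rfl⟩
  have hinv : w.invFun (w.toFun x) = x := w.left_inv x hxw
  refine ⟨w.symm.trans m, j + k, hw.symm.trans hm, by omega, ⟨w.mapsTo hxw, ?_⟩, ?_⟩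
  · simpa [PartialIso.symm, hinv] using hx
  · simpa [PartialIso.symm, PartialIso.trans, hinv] using hmx

end Thickening

theorem MeasureTheory.Measure.AbsolutelyContinuous.tendsto_measure_nhds_zero {α ι : Type*}
    [MeasurableSpace α] {μ ν : Measure α} [IsFiniteMeasure ν] [SigmaFinite μ] (h : ν ≪ μ)
    {l : Filter ι} {s : ι → Set α} (hs : Tendsto (fun i => μ (s i)) l (𝓝 0)) :
    Tendsto (fun i => ν (s i)) l (𝓝 0) := by
  rw [← Measure.withDensity_rnDeriv_eq ν μ h]
  simp only [withDensity_apply']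
  exact tendsto_setLIntegral_zero (Measure.lintegral_rnDeriv_lt_top ν μ).ne hs

theorem ENNReal.tendsto_tsum_of_dominated_convergence {F : ℕ → ℕ → ℝ≥0∞} {bound : ℕ → ℝ≥0∞}
    (h_bound : ∀ n i, F n i ≤ bound i) (h_fin : ∑' i, bound i ≠ ∞)
    (h_lim : ∀ i, Tendsto (fun n => F n i) atTop (𝓝 0)) :
    Tendsto (fun n => ∑' i, F n i) atTop (𝓝 0) := by
  simp_rw [← lintegral_count] at h_fin ⊢
  simpa using tendsto_lintegral_of_dominated_convergence (μ := Measure.count) bound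
    (fun _ => measurable_of_countable _) (fun n => Eventually.of_forall (h_bound n)) h_fin
    (Eventually.of_forall h_lim)

theorem exists_measure_sdiff_succ_le {μ : Measure X} [IsFiniteMeasure μ] {N : ℕ → Set X}
    (hN : Monotone N) (hNm : ∀ k, MeasurableSet (N k)) (n : ℕ) :
    ∃ k ≤ n, μ (N (k + 1) \ N k) ≤ μ Set.univ / (n + 1) := by
  have hsum : ∑ k ∈ Finset.range (n + 1), μ (N (k + 1) \ N k)
      ≤ ∑ _k ∈ Finset.range (n + 1), μ Set.univ / (n + 1) := by
    rw [Finset.sum_const, Finset.card_range, nsmul_eq_mul, Nat.cast_succ,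
      ENNReal.mul_div_cancel (by simp) (by simp)]
    simp_rw [← hN.disjointed_add_one]
    exact sum_measure_le_measure_univ
      (fun k _ => (MeasurableSet.disjointed hNm _).nullMeasurableSet)
      fun i _ j _ hij => (disjoint_disjointed N (by simpa using hij)).aedisjoint
  obtain ⟨k, hk, hle⟩ := ENNReal.exists_le_of_sum_le Finset.nonempty_range_add_one hsum
  exact ⟨k, Nat.lt_succ_iff.1 (Finset.mem_range.1 hk), hle⟩

section QuasiInvariance

variable {μ : Measure X} {R : Set (X × X)}

theorem QuasiInvariant.tendsto_measure_image [IsFiniteMeasure μ] (hqi : QuasiInvariant μ R)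
    {f : PartialIso X} (hf : f.IsInnerOf R) {ι : Type*} {l : Filter ι} {S : ι → Set X}
    (hS : ∀ i, S i ⊆ f.dom) (h : Tendsto (fun i => μ (S i)) l (𝓝 0)) :
    Tendsto (fun i => μ (f.toFun '' S i)) l (𝓝 0) := by
  -- `ν` is `μ` pulled back along `f`: `ν S = μ (f '' (S ∩ f.dom))` for measurable `S`
  set ν := (μ.restrict f.ran).map f.invFun
  have hν : ν ≪ μ := by
    refine Measure.AbsolutelyContinuous.mk fun S hSm hS0 => ?_
    have himage : f.invFun ⁻¹' S ∩ f.ran = f.toFun '' (S ∩ f.dom) := by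
      rw [f.image_eq_preimage_inter Set.inter_subset_right, Set.preimage_inter, Set.inter_assoc,
        Set.inter_eq_right.2 f.mapsTo_inv.subset_preimage]
    rw [Measure.map_apply f.measurable_invFun hSm, Measure.restrict_apply' f.measurableSet_ran,
      himage]
    exact hqi f hf _ Set.inter_subset_right (hSm.inter f.measurableSet_dom)
      (measure_mono_null Set.inter_subset_left hS0)
  refine tendsto_of_tendsto_of_tendsto_of_le_of_le tendsto_const_nhds
    (hν.tendsto_measure_nhds_zero h) (fun _ => zero_le) fun i => ?_
  calc μ (f.toFun '' S i) = μ.restrict f.ran (f.invFun ⁻¹' S i) := by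
        rw [Measure.restrict_apply' f.measurableSet_ran, f.image_eq_preimage_inter (hS i)]
    _ ≤ ν (S i) := Measure.le_map_apply f.measurable_invFun.aemeasurable _

end QuasiInvariance

namespace PartialIso

variable {μ : Measure X} {A : ℕ → Set X} {R : Set (X × X)}

def AlmostPreserves (μ : Measure X) (A : ℕ → Set X) (f : PartialIso X) : Prop :=
  Tendsto (fun n => μ (f.toFun '' (A n ∩ f.dom) \ A n)) atTop (𝓝 0)

theorem almostPreserves_refl : (refl X).AlmostPreserves μ A := by
  simp [AlmostPreserves, refl]

theorem AlmostPreserves.trans [IsFiniteMeasure μ] (hqi : QuasiInvariant μ R)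
    {f g : PartialIso X} (hg : g.IsInnerOf R) (hfA : f.AlmostPreserves μ A)
    (hgA : g.AlmostPreserves μ A) : (f.trans g).AlmostPreserves μ A := by
  have hsub : ∀ n, (f.trans g).toFun '' (A n ∩ (f.trans g).dom) \ A n ⊆
      (g.toFun '' (A n ∩ g.dom) \ A n) ∪
        g.toFun '' ((f.toFun '' (A n ∩ f.dom) \ A n) ∩ g.dom) := by
    rintro n _ ⟨⟨x, ⟨hxA, hxf, hxg⟩, rfl⟩, hyA⟩
    by_cases hfx : f.toFun x ∈ A n
    · exact Or.inl ⟨⟨f.toFun x, ⟨hfx, hxg⟩, rfl⟩, hyA⟩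
    · exact Or.inr ⟨f.toFun x, ⟨⟨⟨x, ⟨hxA, hxf⟩, rfl⟩, hfx⟩, hxg⟩, rfl⟩
  have hfg : Tendsto (fun n => μ (g.toFun '' ((f.toFun '' (A n ∩ f.dom) \ A n) ∩ g.dom)))
      atTop (𝓝 0) :=
    hqi.tendsto_measure_image hg (fun _ => Set.inter_subset_right)
      (tendsto_of_tendsto_of_tendsto_of_le_of_le tendsto_const_nhds hfA (fun _ => zero_le)
        fun _ => measure_mono Set.inter_subset_left)
  exact tendsto_of_tendsto_of_tendsto_of_le_of_le tendsto_const_nhds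
    (by simpa using hgA.add hfg) (fun _ => zero_le)
    fun n => (measure_mono (hsub n)).trans (measure_union_le _ _)

theorem AlmostPreserves.of_cover [MeasurableEq X] [IsFiniteMeasure μ] {f : PartialIso X}
    {g : ℕ → PartialIso X} (hgA : ∀ i, (g i).AlmostPreserves μ A)
    (hcover : μ (f.toFun '' (f.dom \ ⋃ i, {x ∈ (g i).dom | f.toFun x = (g i).toFun x})) = 0) :
    f.AlmostPreserves μ A := by
  set D := disjointed fun i => f.dom ∩ {x ∈ (g i).dom | f.toFun x = (g i).toFun x}
  have hDf : ∀ i, D i ⊆ f.dom := fun i => (disjointed_subset _ i).trans Set.inter_subset_left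
  have hDg : ∀ i, ∀ x ∈ D i, x ∈ (g i).dom ∧ f.toFun x = (g i).toFun x :=
    fun i x hx => (disjointed_subset _ i hx).2
  have hDm : ∀ i, MeasurableSet (D i) := MeasurableSet.disjointed fun i =>
    f.measurableSet_dom.inter <| (g i).measurableSet_dom.inter <|
      measurableSet_eq_fun f.measurable_toFun (g i).measurable_toFun
  have hsub : ∀ n, f.toFun '' (A n ∩ f.dom) \ A n ⊆
      f.toFun '' (f.dom \ ⋃ i, {x ∈ (g i).dom | f.toFun x = (g i).toFun x}) ∪
        ⋃ i, ((g i).toFun '' (A n ∩ D i) \ A n) := by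
    rintro n _ ⟨⟨x, ⟨hxA, hxf⟩, rfl⟩, hyA⟩
    by_cases hx : x ∈ ⋃ i, {x ∈ (g i).dom | f.toFun x = (g i).toFun x}
    · have hxD : x ∈ ⋃ i, D i := by
        rw [iUnion_disjointed, ← Set.inter_iUnion]
        exact ⟨hxf, hx⟩
      obtain ⟨i, hxi⟩ := Set.mem_iUnion.1 hxD
      exact Or.inr (Set.mem_iUnion.2 ⟨i, ⟨x, ⟨hxA, hxi⟩, (hDg i x hxi).2.symm⟩, hyA⟩)
    · exact Or.inl ⟨x, ⟨hxf, hx⟩, rfl⟩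
  -- the pieces `f '' D i = g i '' D i` are disjoint, which dominates the series
  have himage : ∀ i, (g i).toFun '' D i = f.toFun '' D i :=
    fun i => Set.image_congr fun x hx => (hDg i x hx).2.symm
  have hsum : ∑' i, μ (f.toFun '' D i) ≠ ∞ := by
    rw [← measure_iUnion (fun i j hij => ((disjoint_disjointed _ hij).image f.injOn (hDf i)
      (hDf j))) fun i => f.measurableSet_image (hDm i) (hDf i)]
    exact measure_ne_top μ _
  have hseries := ENNReal.tendsto_tsum_of_dominated_convergence
    (F := fun n i => μ ((g i).toFun '' (A n ∩ D i) \ A n))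
    (fun n i => (measure_mono (Set.sdiff_subset.trans
      (Set.image_mono Set.inter_subset_right))).trans_eq (congrArg μ (himage i))) hsum
    fun i => tendsto_of_tendsto_of_tendsto_of_le_of_le tendsto_const_nhds (hgA i)
      (fun _ => zero_le) fun n => measure_mono
        (Set.sdiff_subset_sdiff_left (Set.image_mono (Set.inter_subset_inter_right _
          fun x hx => (hDg i x hx).1)))
  refine tendsto_of_tendsto_of_tendsto_of_le_of_le tendsto_const_nhds hseries (fun _ => zero_le)
    fun n => (measure_mono (hsub n)).trans ((measure_union_le _ _).trans ?_)
  rw [hcover, zero_add]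
  exact measure_iUnion_le _

end PartialIso

section AsympInvariance

variable {μ : Measure X} {R : Set (X × X)} {Φ : Set (PartialIso X)} {A : ℕ → Set X}

theorem IsWord.almostPreserves [IsFiniteMeasure μ] (hqi : QuasiInvariant μ R)
    (hR : Equivalence (fun x y => (x, y) ∈ R)) (hΦ : ∀ φ ∈ Φ, φ.IsInnerOf R)
    (hletter : ∀ a, (a ∈ Φ ∨ ∃ ψ ∈ Φ, a = ψ.symm) → a.AlmostPreserves μ A)
    {m : PartialIso X} {k : ℕ} (hm : IsWord Φ m k) : m.AlmostPreserves μ A :=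
  IsWord.induction almostPreserves_refl
    (fun a _ _ ha hw ih => (hletter a ha).trans hqi (hw.isInnerOf hR hΦ) ih) hm

theorem asympInvariantRel_of_isGraphing [MeasurableEq X] [IsFiniteMeasure μ]
    (hqi : QuasiInvariant μ R) (hR : Equivalence (fun x y => (x, y) ∈ R)) (hΦfin : Φ.Finite)
    (hΦ : IsGraphing Φ μ R)
    (hletter : ∀ a, (a ∈ Φ ∨ ∃ ψ ∈ Φ, a = ψ.symm) → a.AlmostPreserves μ A) :
    AsympInvariantRel μ R A := by
  intro f hf
  obtain ⟨g, hg⟩ := (countable_setOf_isWord hΦfin).exists_eq_range ⟨refl X, 0, isWord_refl Φ⟩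
  have hgw : ∀ i, ∃ k, IsWord Φ (g i) k := fun i => by
    simpa [← hg] using Set.mem_range_self (f := g) i
  refine AlmostPreserves.of_cover
    (fun i => (hgw i).choose_spec.almostPreserves hqi hR hΦ.1 hletter) ?_
  have hZ : μ (f.dom \ ⋃ i, {x ∈ (g i).dom | f.toFun x = (g i).toFun x}) = 0 := by
    refine measure_mono_null ?_ (ae_iff.1 hΦ.2)
    rintro x ⟨hxf, hx⟩ hreach
    obtain ⟨m, k, hm, hxm, hmx⟩ := hreach _ (hf x hxf)
    obtain ⟨i, rfl⟩ : m ∈ Set.range g := hg ▸ ⟨k, hm⟩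
    exact hx (Set.mem_iUnion.2 ⟨i, hxm, hmx.symm⟩)
  exact hqi f hf _ Set.sdiff_subset (f.measurableSet_dom.diff (MeasurableSet.iUnion fun i =>
    (g i).measurableSet_dom.inter (measurableSet_eq_fun f.measurable_toFun
      (g i).measurable_toFun))) hZ

theorem PartialIso.AlmostPreserves.tendsto_measure_inter_preimage_compl [IsFiniteMeasure μ]
    (hqi : QuasiInvariant μ R) (hR : ∀ {x y}, (x, y) ∈ R → (y, x) ∈ R) {f : PartialIso X}
    (hf : f.IsInnerOf R) (hfA : f.AlmostPreserves μ A) :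
    Tendsto (fun n => μ (A n ∩ (f.dom ∩ f.toFun ⁻¹' (A n)ᶜ))) atTop (𝓝 0) := by
  refine tendsto_of_tendsto_of_tendsto_of_le_of_le tendsto_const_nhds
    (hqi.tendsto_measure_image (hf.symm hR)
      (fun _ => Set.sdiff_subset.trans ((Set.image_mono Set.inter_subset_right).trans
        f.mapsTo.image_subset)) hfA) (fun _ => zero_le) fun n => measure_mono ?_
  rintro x ⟨hxA, hxf, hfx⟩
  exact ⟨f.toFun x, ⟨⟨x, ⟨hxA, hxf⟩, rfl⟩, hfx⟩, f.left_inv x hxf⟩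

theorem AsympInvariantRel.tendsto_measure_inter_wordThickening_compl [IsFiniteMeasure μ]
    (hqi : QuasiInvariant μ R) (hR : Equivalence (fun x y => (x, y) ∈ R)) (hΦfin : Φ.Finite)
    (hΦ : ∀ φ ∈ Φ, φ.IsInnerOf R) (hA : AsympInvariantRel μ R A) (r : ℕ) :
    Tendsto (fun n => μ (A n ∩ wordThickening Φ r (A n)ᶜ)) atTop (𝓝 0) := by
  have hW := finite_setOf_isWord_le hΦfin r
  have hm : ∀ m ∈ hW.toFinset,
      Tendsto (fun n => μ (A n ∩ (m.dom ∩ m.toFun ⁻¹' (A n)ᶜ))) atTop (𝓝 0) := by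
    intro m hm
    obtain ⟨k, -, hmk⟩ := hW.mem_toFinset.1 hm
    have hinner := hmk.isInnerOf hR hΦ
    exact (show m.AlmostPreserves μ A from hA m hinner).tendsto_measure_inter_preimage_compl
      hqi hR.symm hinner
  refine tendsto_of_tendsto_of_tendsto_of_le_of_le tendsto_const_nhds
    (by simpa only [Finset.sum_const_zero] using tendsto_finsetSum _ hm) (fun _ => zero_le)
    fun n => (measure_mono ?_).trans (measure_biUnion_finset_le hW.toFinset _)
  rw [wordThickening_eq_biUnion, Set.inter_iUnion₂]
  simp only [Set.Finite.mem_toFinset, subset_rfl]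

end AsympInvariance

section Concentration

variable {μ : Measure X} [IsProbabilityMeasure μ] {R : Set (X × X)} {Φ : Set (PartialIso X)}

theorem Concentrated.stronglyErgodic (hqi : QuasiInvariant μ R)
    (hR : Equivalence (fun x y => (x, y) ∈ R)) (hΦfin : Φ.Finite) (hΦ : ∀ φ ∈ Φ, φ.IsInnerOf R)
    (hconc : Concentrated Φ μ) : StronglyErgodic μ R := by
  rintro ⟨A, hAm, hA, δ, hδ, hAδ⟩
  have hδ2 : 0 < δ / 2 := ENNReal.half_pos hδ.ne'
  obtain ⟨r, hr⟩ := hconc (δ / 2) hδ2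
  obtain ⟨n, hn⟩ := ((hA.tendsto_measure_inter_wordThickening_compl hqi hR hΦfin hΦ r).eventually
    (gt_mem_nhds hδ2)).exists
  set S := A n ∩ wordThickening Φ r (A n)ᶜ
  have hS : MeasurableSet S := (hAm n).inter (measurableSet_wordThickening hΦfin r (hAm n).compl)
  have hδ1 : δ ≤ 1 := (hAδ 0).1.trans prob_le_one
  have hAS : δ / 2 ≤ μ (A n \ S) := by
    refine ENNReal.le_of_add_le_add_left (ENNReal.div_ne_top (ne_top_of_le_ne_top
      ENNReal.one_ne_top hδ1) two_ne_zero) ?_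
    calc δ / 2 + δ / 2 = δ := ENNReal.add_halves δ
      _ ≤ μ (A n) := (hAδ n).1
      _ ≤ μ (A n ∩ S) + μ (A n \ S) := measure_le_inter_add_sdiff μ _ _
      _ ≤ δ / 2 + μ (A n \ S) := by
        gcongr
        exact (measure_mono Set.inter_subset_right).trans hn.le
  have hAc : δ / 2 ≤ μ (A n)ᶜ :=
    calc δ / 2 ≤ δ := ENNReal.half_le_self
      _ = 1 - (1 - δ) := (ENNReal.sub_sub_cancel ENNReal.one_ne_top hδ1).symm
      _ ≤ 1 - μ (A n) := tsub_le_tsub_left (hAδ n).2 1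
      _ = μ (A n)ᶜ := (prob_compl_eq_one_sub (hAm n)).symm
  have hfar : (A n \ S) ∩ wordThickening Φ r (A n)ᶜ = ∅ := by
    ext x
    simp only [S, Set.mem_inter_iff, Set.mem_sdiff, Set.mem_empty_iff_false, iff_false]
    tauto
  simpa [wordDistLE_iff, hfar] using hr _ _ ((hAm n).diff hS) (hAm n).compl hAS hAc

theorem StronglyErgodic.concentrated [MeasurableEq X] (hqi : QuasiInvariant μ R)
    (hR : Equivalence (fun x y => (x, y) ∈ R)) (hΦfin : Φ.Finite) (hΦ : IsGraphing Φ μ R)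
    (hse : StronglyErgodic μ R) : Concentrated Φ μ := by
  by_contra hnc
  simp only [Concentrated, not_forall, not_exists, exists_prop] at hnc
  obtain ⟨δ, hδ, hfar⟩ := hnc
  choose A B hA hB hμA hμB hAB using hfar
  choose k hkn hk using fun n => exists_measure_sdiff_succ_le (μ := μ)
    monotone_wordThickening (fun r => measurableSet_wordThickening hΦfin r (hB n)) n
  set E := fun n => wordThickening Φ (k n) (B n)
  have hAE : ∀ n, μ (A n ∩ E n) = 0 := fun n => measure_mono_null
    (Set.inter_subset_inter_right _ (monotone_wordThickening (hkn n)))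
    (nonpos_iff_eq_zero.1 (not_lt.1 (mt wordDistLE_iff.2 (hAB n))))
  have hshell : Tendsto (fun n : ℕ => μ Set.univ / (n + 1)) atTop (𝓝 0) := by
    simpa using ENNReal.Tendsto.const_div (a := μ Set.univ)
      (ENNReal.tendsto_nat_nhds_top.comp (tendsto_add_atTop_nat 1)) (Or.inr (measure_ne_top μ _))
  refine hse ⟨E, fun n => measurableSet_wordThickening hΦfin _ (hB n), ?_, δ, hδ, fun n => ⟨?_, ?_⟩⟩
  · refine asympInvariantRel_of_isGraphing hqi hR hΦfin hΦ fun a ha => ?_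
    refine tendsto_of_tendsto_of_tendsto_of_le_of_le tendsto_const_nhds hshell (fun _ => zero_le)
      fun n => (measure_mono (Set.sdiff_subset_sdiff_left ?_)).trans (hk n)
    exact image_wordThickening_subset (isWord_one Φ ha) (k n)
  · exact (hμB n).trans (measure_mono (subset_wordThickening _))
  · calc μ (E n) ≤ μ (E n ∩ A n) + μ (E n \ A n) := measure_le_inter_add_sdiff μ _ _
      _ ≤ μ (A n)ᶜ := by
        rw [Set.inter_comm, hAE n, zero_add]
        exact measure_mono fun x hx => hx.2
      _ = 1 - μ (A n) := prob_compl_eq_one_sub (hA n)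
      _ ≤ 1 - δ := tsub_le_tsub_left (hμA n) 1

end Concentration

theorem stmt4_general {X : Type*} [MeasurableSpace X] [StandardBorelSpace X]
    (μ : Measure X) [IsProbabilityMeasure μ]
    (R : Set (X × X)) (hR : IsCountableBorelER R)
    (hqi : QuasiInvariant μ R)
    (Φ : Set (PartialIso X)) (hΦfin : Φ.Finite) (hΦ : IsGraphing Φ μ R) :
    Concentrated Φ μ ↔ StronglyErgodic μ R :=
  ⟨Concentrated.stronglyErgodic hqi hR.2.1 hΦfin hΦ.1,
    StronglyErgodic.concentrated hqi hR.2.1 hΦfin hΦ⟩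

/-- For an ergodic countable Borel equivalence relation of finite type with
quasi-invariant atomless probability measure, concentration of `(X, d_Φ, μ)` for a finite
graphing `Φ` is equivalent to strong ergodicity of `R`. -/
theorem stmt4 {X : Type*} [MeasurableSpace X] [StandardBorelSpace X]
    (μ : Measure X) [IsProbabilityMeasure μ] [NullSingletonClass μ]
    (R : Set (X × X)) (hR : IsCountableBorelER R)
    (hqi : QuasiInvariant μ R) (herg : ErgodicRel μ R)
    (Φ : Set (PartialIso X)) (hΦfin : Φ.Finite) (hΦ : IsGraphing Φ μ R) :
    Concentrated Φ μ ↔ StronglyErgodic μ R :=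
  stmt4_general μ R hR hqi Φ hΦfin hΦ
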